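/- Let n ≥ 1, 1 ≤ k ≤ n−1 and r ≥ 0 be integers. Let u be a polynomial k-form of degree ≤ r on ℝⁿ with vanishing trace on the boundary of the unit cube Iⁿ = [0,1]ⁿ, and suppose du = 0. Then there exists a polynomial (k−1)-form w of degree ≤ r + 1 with vanishing trace on ∂Iⁿ such that dw = u. -/

import Mathlib

open MvPolynomial

/-- A (polynomial) `k`-form on `ℝⁿ`: a family of polynomials indexed by the `k`-element
subsets `J` of the variables, representing `Σ_J u_J dx_J`. -/
abbrev kForm (n k : ℕ) : Type :=
  {J : Finset (Fin n) // J.card = k} → MvPolynomial (Fin n) ℝ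

/-- Substitution of the single variable `x_i := c` (other variables untouched). -/
noncomputable def substAt {n : ℕ} (i : Fin n) (c : ℝ) :
    MvPolynomial (Fin n) ℝ →ₐ[ℝ] MvPolynomial (Fin n) ℝ :=
  MvPolynomial.bind₁ (fun j : Fin n => if j = i then MvPolynomial.C c else MvPolynomial.X j)

/-- `P_rΛ^k`: polynomial `k`-forms all of whose components have total degree `≤ r`. -/
noncomputable def PLambda (n k r : ℕ) : Submodule ℝ (kForm n k) :=
  ⨅ J : {J : Finset (Fin n) // J.card = k},
    Submodule.comap (LinearMap.proj J) (MvPolynomial.restrictTotalDegree (Fin n) ℝ r)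

/-- `P_rΛ^k_0(Iⁿ)`: polynomial `k`-forms of total degree `≤ r` with vanishing trace on the
boundary of the unit cube `[0,1]ⁿ`: for every variable `i`, every `c ∈ {0,1}` and every
index set `J` with `i ∉ J`, substituting `x_i := c` into `u_J` gives `0`. -/
noncomputable def PLambda0 (n k r : ℕ) : Submodule ℝ (kForm n k) :=
  PLambda n k r ⊓
    ⨅ (i : Fin n), ⨅ c ∈ ({0, 1} : Set ℝ),
      ⨅ (J : {J : Finset (Fin n) // J.card = k}), ⨅ (_ : i ∉ J.1),
        LinearMap.ker ((substAt i c).toLinearMap ∘ₗ LinearMap.proj J)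

/-- The exterior derivative on polynomial `k`-forms:
`(du)_K = Σ_{i∈K} (−1)^{#{j∈K : j<i}} ∂u_{K∖{i}}/∂x_i`. -/
noncomputable def polyExtDeriv (n k : ℕ) : kForm n k →ₗ[ℝ] kForm n (k + 1) :=
  LinearMap.pi fun K =>
    ∑ i ∈ K.1.attach,
      ((-1 : ℝ) ^ (K.1.filter (fun j => j < i.1)).card) •
        ((MvPolynomial.pderiv (R := ℝ) i.1).toLinearMap ∘ₗ
          (LinearMap.proj ⟨K.1.erase i.1, by
            simp [Finset.card_erase_of_mem i.2, K.2]⟩))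

noncomputable def antider {n : ℕ} (i : Fin n) : MvPolynomial (Fin n) ℝ →ₗ[ℝ] MvPolynomial (Fin n) ℝ :=
  (basisMonomials (Fin n) ℝ).constr ℝ fun m =>
    monomial (m + Finsupp.single i 1) (((m i : ℝ) + 1)⁻¹)

theorem antider_monomial {n : ℕ} (i : Fin n) (m : Fin n →₀ ℕ) (a : ℝ) :
    antider i (monomial m a) = monomial (m + Finsupp.single i 1) (a * ((m i : ℝ) + 1)⁻¹) := by
  have : (monomial m a : MvPolynomial (Fin n) ℝ) = a • basisMonomials (Fin n) ℝ m := by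
    rw [coe_basisMonomials]; simp [smul_monomial]
  rw [this, map_smul, antider, Module.Basis.constr_basis, smul_monomial, smul_eq_mul]

theorem substAt_monomial {n : ℕ} (i : Fin n) (c : ℝ) (s : Fin n →₀ ℕ) (a : ℝ) :
    substAt i c (monomial s a) = c ^ s i • monomial (s.erase i) a := by
  classical
  rw [substAt, bind₁_monomial]
  by_cases hi : i ∈ s.support
  · rw [← Finset.prod_erase_mul _ _ hi]
    have h1 : ∏ j ∈ s.support.erase i,
        (if j = i then (C c : MvPolynomial (Fin n) ℝ) else X j) ^ s j
        = monomial (s.erase i) 1 := by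
      rw [monomial_eq, C_1, one_mul, Finsupp.prod]
      rw [Finsupp.support_erase]
      refine Finset.prod_congr rfl fun j hj => ?_
      rw [Finset.mem_erase] at hj
      rw [if_neg hj.1, Finsupp.erase_ne hj.1]
    rw [h1, if_pos rfl, ← C_pow]
    rw [smul_monomial, monomial_eq, monomial_eq, C_1, one_mul]
    rw [smul_eq_mul, C_mul]
    ring
  · have hs : s i = 0 := Finsupp.notMem_support_iff.mp hi
    have he : s.erase i = s := by
      ext j
      rcases eq_or_ne j i with rfl | hj
      · simp [hs]
      · simp [Finsupp.erase_ne hj]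
    rw [hs, pow_zero, one_smul, he]
    have h1 : ∏ j ∈ s.support,
        (if j = i then (C c : MvPolynomial (Fin n) ℝ) else X j) ^ s j
        = monomial s 1 := by
      rw [monomial_eq, C_1, one_mul, Finsupp.prod]
      exact Finset.prod_congr rfl fun j hj => by rw [if_neg (by rintro rfl; exact hi hj)]
    rw [h1, monomial_eq, monomial_eq, C_1, one_mul]

section FinsuppHelpers
variable {n : ℕ} {i j : Fin n} (m : Fin n →₀ ℕ)

theorem fsA : (m + Finsupp.single i 1 : Fin n →₀ ℕ) i = m i + 1 := by simp

theorem fsB (h : j ≠ i) : (m + Finsupp.single i 1 : Fin n →₀ ℕ) j = m j := by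
  simp [Finsupp.single_apply, Ne.symm h]

theorem fsC : m + Finsupp.single i 1 - Finsupp.single i 1 = (m : Fin n →₀ ℕ) := by
  ext l; rcases eq_or_ne l i with rfl | hl <;> simp [Finsupp.single_apply, *]

theorem fsD (h : j ≠ i) : m + Finsupp.single i 1 - Finsupp.single j 1
    = (m - Finsupp.single j 1 + Finsupp.single i 1 : Fin n →₀ ℕ) := by
  ext l
  rcases eq_or_ne l i with rfl | hl <;> rcases eq_or_ne l j with rfl | hlj <;>
    simp_all [Finsupp.single_apply, Finsupp.tsub_apply, eq_comm] <;> omega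

theorem fsE (h : j ≠ i) : (m - Finsupp.single j 1 : Fin n →₀ ℕ) i = m i := by
  simp [Finsupp.tsub_apply, Finsupp.single_apply, h, Ne.symm h]

theorem fsF : ((m + Finsupp.single i 1 : Fin n →₀ ℕ)).erase j
    = (if j = i then m.erase i else m.erase j + Finsupp.single i 1 : Fin n →₀ ℕ) := by
  split_ifs with hji
  · subst hji
    ext l
    rcases eq_or_ne l j with rfl | hl
    · simp [Finsupp.erase_same]
    · simp [Finsupp.erase_ne hl, Finsupp.single_apply, Ne.symm hl]
  · ext l
    rcases eq_or_ne l j with rfl | hl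
    · simp [Finsupp.erase_same, Finsupp.single_apply, hji, Ne.symm hji]
    · simp [Finsupp.erase_ne hl, Finsupp.single_apply]

theorem fsG (h : j ≠ i) : ((m.erase j : Fin n →₀ ℕ)) i = m i := by
  simp [Finsupp.erase_ne (show i ≠ j from Ne.symm h)]

theorem fsH (hm : m i = 0) : m.erase i = m := by
  ext l
  rcases eq_or_ne l i with rfl | hl
  · simp [Finsupp.erase_same, hm]
  · simp [Finsupp.erase_ne hl]

theorem fsI (hm : m i ≠ 0) : m - Finsupp.single i 1 + Finsupp.single i 1 = (m : Fin n →₀ ℕ) := by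
  ext l
  rcases eq_or_ne l i with rfl | hl
  · simp only [Finsupp.add_apply, Finsupp.tsub_apply, Finsupp.single_eq_same]
    omega
  · simp [Finsupp.single_apply, Finsupp.tsub_apply, Ne.symm hl]

theorem fsJ : (m - Finsupp.single i 1 : Fin n →₀ ℕ) i = m i - 1 := by
  simp [Finsupp.tsub_apply]

theorem fsK (h : j ≠ i) : (m.erase i : Fin n →₀ ℕ) - Finsupp.single j 1
    = (m - Finsupp.single j 1).erase i := by
  ext l
  rcases eq_or_ne l i with rfl | hl
  · simp [Finsupp.erase_same, Finsupp.tsub_apply, Finsupp.single_apply, h]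
  · simp [Finsupp.erase_ne hl, Finsupp.tsub_apply]

theorem fsL (h : j ≠ i) : ((m.erase i : Fin n →₀ ℕ)) j = m j := by
  simp [Finsupp.erase_ne h]

theorem fsM (h : j ≠ i) : (m.erase i).erase j = ((m.erase j).erase i : Fin n →₀ ℕ) := by
  ext l
  rcases eq_or_ne l i with rfl | hl <;> rcases eq_or_ne l j with rfl | hlj <;>
    simp_all [Finsupp.erase_same, Finsupp.erase_ne]

end FinsuppHelpers

section Lemmas
variable {n : ℕ}

theorem pderiv_antider (i : Fin n) (p : MvPolynomial (Fin n) ℝ) :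
    pderiv i (antider i p) = p := by
  induction p using MvPolynomial.induction_on' with
  | add p q hp hq => simp [map_add, hp, hq]
  | monomial m a =>
    rw [antider_monomial, pderiv_monomial, fsC, fsA]
    congr 1
    push_cast
    field_simp

theorem substAt_zero_antider (i : Fin n) (p : MvPolynomial (Fin n) ℝ) :
    substAt i 0 (antider i p) = 0 := by
  induction p using MvPolynomial.induction_on' with
  | add p q hp hq => simp [map_add, hp, hq]
  | monomial m a =>
    rw [antider_monomial, substAt_monomial, fsA, zero_pow (by omega), zero_smul]

theorem antider_pderiv (i : Fin n) (p : MvPolynomial (Fin n) ℝ) :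
    antider i (pderiv i p) = p - substAt i 0 p := by
  induction p using MvPolynomial.induction_on' with
  | add p q hp hq => simp only [map_add, hp, hq]; ring
  | monomial m a =>
    rw [pderiv_monomial, antider_monomial, substAt_monomial]
    by_cases hm : m i = 0
    · rw [hm]
      simp only [pow_zero, one_smul, Nat.cast_zero, mul_zero, zero_mul, map_zero, fsH m hm,
        sub_self]
    · rw [fsI m hm, fsJ, zero_pow hm, zero_smul, sub_zero]
      congr 1
      have : ((m i - 1 : ℕ) : ℝ) + 1 = (m i : ℝ) := by
        push_cast [Nat.cast_pred (Nat.pos_of_ne_zero hm)]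
        ring
      rw [this]
      field_simp

theorem pderiv_antider_comm {i j : Fin n} (h : j ≠ i) (p : MvPolynomial (Fin n) ℝ) :
    pderiv j (antider i p) = antider i (pderiv j p) := by
  induction p using MvPolynomial.induction_on' with
  | add p q hp hq => simp [map_add, hp, hq]
  | monomial m a =>
    rw [antider_monomial, pderiv_monomial, pderiv_monomial, antider_monomial,
      fsB m h, fsD m h, fsE m h]
    ring_nf

theorem substAt_antider_comm {i j : Fin n} (h : j ≠ i) (c : ℝ) (p : MvPolynomial (Fin n) ℝ) :
    substAt j c (antider i p) = antider i (substAt j c p) := by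
  induction p using MvPolynomial.induction_on' with
  | add p q hp hq => simp [map_add, hp, hq]
  | monomial m a =>
    rw [antider_monomial, substAt_monomial, substAt_monomial, map_smul, antider_monomial,
      fsB m h, fsF, if_neg h, fsG m h]

theorem pderiv_substAt_comm {i j : Fin n} (h : j ≠ i) (c : ℝ) (p : MvPolynomial (Fin n) ℝ) :
    pderiv j (substAt i c p) = substAt i c (pderiv j p) := by
  induction p using MvPolynomial.induction_on' with
  | add p q hp hq => simp [map_add, hp, hq]
  | monomial m a =>
    rw [substAt_monomial, Derivation.map_smul]
    rw [pderiv_monomial, pderiv_monomial, substAt_monomial, fsL m h, fsK m h, fsE m h]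

theorem substAt_substAt_comm {i j : Fin n} (h : j ≠ i) (c d : ℝ) (p : MvPolynomial (Fin n) ℝ) :
    substAt j c (substAt i d p) = substAt i d (substAt j c p) := by
  induction p using MvPolynomial.induction_on' with
  | add p q hp hq => simp [map_add, hp, hq]
  | monomial m a =>
    rw [substAt_monomial, map_smul, substAt_monomial, substAt_monomial, map_smul,
      substAt_monomial, fsL m h, fsG m h, fsM m h, smul_comm]

end Lemmas

section Unused
variable {n : ℕ}

/-- Variable `i` does not occur in `p`. -/
def Unused (i : Fin n) (p : MvPolynomial (Fin n) ℝ) : Prop :=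
  ∀ s ∈ p.support, s i = 0

theorem unused_zero (i : Fin n) : Unused i (0 : MvPolynomial (Fin n) ℝ) := by
  intro s hs; simp at hs

theorem unused_sum {i : Fin n} {α : Type*} {S : Finset α} {f : α → MvPolynomial (Fin n) ℝ}
    (h : ∀ x ∈ S, Unused i (f x)) : Unused i (∑ x ∈ S, f x) := by
  intro s hs
  by_contra hsi
  have hc : coeff s (∑ x ∈ S, f x) = 0 := by
    rw [coeff_sum]
    refine Finset.sum_eq_zero fun x hx => ?_
    by_contra hcx
    exact hsi (h x hx s (mem_support_iff.mpr hcx))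
  exact mem_support_iff.mp hs hc

theorem unused_monomial {i : Fin n} {m : Fin n →₀ ℕ} (hm : m i = 0) (a : ℝ) :
    Unused i (monomial m a) := by
  intro s hs
  have := support_monomial_subset hs
  simp only [Finset.mem_singleton] at this
  subst this; exact hm

theorem unused_smul {i : Fin n} {p : MvPolynomial (Fin n) ℝ} (h : Unused i p) (c : ℝ) :
    Unused i (c • p) := by
  intro s hs
  apply h
  rw [mem_support_iff] at hs ⊢
  intro h0
  rw [smul_eq_C_mul, coeff_C_mul, h0, mul_zero] at hs
  exact hs rfl

theorem unused_pderiv_eq_zero {i : Fin n} {p : MvPolynomial (Fin n) ℝ} (h : Unused i p) :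
    pderiv i p = 0 := by
  conv_lhs => rw [as_sum p]
  rw [map_sum]
  refine Finset.sum_eq_zero fun s hs => ?_
  rw [pderiv_monomial, h s hs]
  simp

theorem unused_antider {i j : Fin n} {p : MvPolynomial (Fin n) ℝ} (hij : j ≠ i)
    (h : Unused j p) : Unused j (antider i p) := by
  conv => rw [as_sum p]
  rw [map_sum]
  refine unused_sum fun s hs => ?_
  rw [antider_monomial]
  exact unused_monomial (by rw [fsB s hij, h s hs]) _

theorem unused_substAt_self {i : Fin n} (c : ℝ) (p : MvPolynomial (Fin n) ℝ) :
    Unused i (substAt i c p) := by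
  conv => rw [as_sum p]
  rw [map_sum]
  refine unused_sum fun s hs => ?_
  rw [substAt_monomial]
  exact unused_smul (unused_monomial (Finsupp.erase_same) _) _

theorem unused_substAt {i j : Fin n} (hij : j ≠ i) (c : ℝ) {p : MvPolynomial (Fin n) ℝ}
    (h : Unused j p) : Unused j (substAt i c p) := by
  conv => rw [as_sum p]
  rw [map_sum]
  refine unused_sum fun s hs => ?_
  rw [substAt_monomial]
  exact unused_smul (unused_monomial (by rw [fsL s hij, h s hs]) _) _

theorem unused_X_mul {i j : Fin n} (hij : j ≠ i) {p : MvPolynomial (Fin n) ℝ}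
    (h : Unused j p) : Unused j (X i * p) := by
  conv => rw [as_sum p]
  rw [Finset.mul_sum]
  refine unused_sum fun s hs => ?_
  rw [X, monomial_mul, one_mul]
  refine unused_monomial ?_ _
  rw [show (Finsupp.single i 1 + s : Fin n →₀ ℕ) j = s j from by
    simp [Finsupp.single_apply, hij, Ne.symm hij]]
  exact h s hs

theorem coeff_pderiv {i : Fin n} (m : Fin n →₀ ℕ) (p : MvPolynomial (Fin n) ℝ) :
    coeff m (pderiv i p) = ((m i : ℝ) + 1) * coeff (m + Finsupp.single i 1) p := by
  induction p using MvPolynomial.induction_on' with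
  | add p q hp hq => simp [map_add, hp, hq]; ring
  | monomial u a =>
    rw [pderiv_monomial, coeff_monomial, coeff_monomial]
    by_cases hu : u = m + Finsupp.single i 1
    · subst hu
      rw [if_pos (fsC m), if_pos rfl, fsA]
      push_cast; ring
    · rw [if_neg hu, mul_zero]
      by_cases hum : u - Finsupp.single i 1 = m
      · rw [if_pos hum]
        by_cases hui : u i = 0
        · simp [hui]
        · exact absurd (by rw [← hum, fsI u hui]) hu
      · rw [if_neg hum]

theorem eq_zero_of_pderivs {n : ℕ} (p : MvPolynomial (Fin n) ℝ)
    (h : ∀ i, pderiv i p = 0) (i₁ : Fin n) (h1 : substAt i₁ 0 p = 0) : p = 0 := by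
  have key : ∀ s : Fin n →₀ ℕ, s ≠ 0 → coeff s p = 0 := by
    intro s hs
    obtain ⟨i, hi⟩ : ∃ i, s i ≠ 0 := by
      by_contra hc
      push_neg at hc
      exact hs (Finsupp.ext fun i => hc i)
    have := congrArg (coeff (s - Finsupp.single i 1)) (h i)
    rw [coeff_pderiv, coeff_zero, fsI s hi, fsJ] at this
    have hpos : ((s i - 1 : ℕ) : ℝ) + 1 ≠ 0 := by positivity
    exact (mul_eq_zero.mp this).resolve_left hpos
  have hp : p = C (coeff 0 p) := by
    ext s
    rcases eq_or_ne s 0 with rfl | hs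
    · simp
    · rw [key s hs, coeff_C, if_neg (Ne.symm hs)]
  have : substAt i₁ 0 p = C (coeff 0 p) := by
    conv_lhs => rw [hp]
    exact (substAt i₁ 0).commutes _
  rw [this] at h1
  rw [hp, h1]

end Unused

section Degrees
variable {n : ℕ}

theorem deg_antider (i : Fin n) (p : MvPolynomial (Fin n) ℝ) :
    (antider i p).totalDegree ≤ p.totalDegree + 1 := by
  conv_lhs => rw [as_sum p, map_sum]
  refine totalDegree_finsetSum_le fun s hs => ?_
  rw [antider_monomial]
  refine (totalDegree_monomial_le _ _).trans ?_
  rw [Finsupp.sum_add_index' (fun _ => rfl) (fun _ _ _ => rfl), Finsupp.sum_single_index rfl]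
  exact Nat.add_le_add_right (le_totalDegree hs) 1

theorem sum_erase_le (i : Fin n) (s : Fin n →₀ ℕ) :
    ((s.erase i).sum fun _ e => e) ≤ s.sum fun _ e => e := by
  conv_rhs => rw [← Finsupp.erase_add_single i s]
  rw [Finsupp.sum_add_index' (fun _ => rfl) (fun _ _ _ => rfl)]
  exact Nat.le_add_right _ _

theorem deg_substAt_antider (i : Fin n) (c : ℝ) (p : MvPolynomial (Fin n) ℝ) :
    (substAt i c (antider i p)).totalDegree ≤ p.totalDegree := by
  conv_lhs => rw [as_sum p, map_sum, map_sum]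
  refine totalDegree_finsetSum_le fun s hs => ?_
  rw [antider_monomial, substAt_monomial, fsF, if_pos rfl]
  refine (totalDegree_smul_le _ _).trans ?_
  refine (totalDegree_monomial_le _ _).trans ?_
  exact (sum_erase_le i s).trans (le_totalDegree hs)

theorem deg_substAt (i : Fin n) (c : ℝ) (p : MvPolynomial (Fin n) ℝ) :
    (substAt i c p).totalDegree ≤ p.totalDegree := by
  conv_lhs => rw [as_sum p, map_sum]
  refine totalDegree_finsetSum_le fun s hs => ?_
  rw [substAt_monomial]
  refine (totalDegree_smul_le _ _).trans ?_
  refine (totalDegree_monomial_le _ _).trans ?_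
  exact (sum_erase_le i s).trans (le_totalDegree hs)

end Degrees
section Infra
variable {n : ℕ}

/-- The summand of the exterior derivative, as a function of a plain index. -/
noncomputable def dTerm (k : ℕ) (v : kForm n k) (S : Finset (Fin n)) (hS : S.card = k + 1)
    (i : Fin n) : MvPolynomial (Fin n) ℝ :=
  if h : i ∈ S then
    ((-1 : ℝ) ^ (S.filter (fun j => j < i)).card) •
      pderiv i (v ⟨S.erase i, by simp [Finset.card_erase_of_mem h, hS]⟩)
  else 0

theorem polyExtDeriv_apply (k : ℕ) (v : kForm n k) (K : {K : Finset (Fin n) // K.card = k + 1}) :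
    polyExtDeriv n k v K = ∑ i ∈ K.1, dTerm k v K.1 K.2 i := by
  rw [← Finset.sum_attach K.1 (dTerm k v K.1 K.2)]
  rw [polyExtDeriv, LinearMap.pi_apply, LinearMap.sum_apply]
  refine Finset.sum_congr rfl fun i _ => ?_
  rw [dTerm, dif_pos i.2]
  rfl

end Infra

section Core
variable {n m r k : ℕ}

theorem filter_lt_top {i₀ : Fin n} (K : Finset (Fin n)) (hi₀ : (i₀ : ℕ) = m - 1) (hm : 2 ≤ m)
    (hK : ∀ j ∈ K, (j : ℕ) < m) :
    K.filter (fun j => j < i₀) = K.erase i₀ := by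
  ext j
  simp only [Finset.mem_filter, Finset.mem_erase]
  constructor
  · rintro ⟨hj, hlt⟩
    exact ⟨fun h => by subst h; exact lt_irrefl _ hlt, hj⟩
  · rintro ⟨hne, hj⟩
    refine ⟨hj, ?_⟩
    have h1 := hK j hj
    have h2 : (j : ℕ) ≠ (i₀ : ℕ) := fun h => hne (Fin.ext h)
    exact Fin.lt_def.mpr (by omega)

theorem filter_lt_insert {i₀ i : Fin n} (S : Finset (Fin n)) (h : ¬i₀ < i) :
    (insert i₀ S).filter (fun j => j < i) = S.filter (fun j => j < i) := by
  rw [Finset.filter_insert, if_neg h]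

theorem filter_lt_erase {i₀ i : Fin n} (K : Finset (Fin n)) (hi₀ : i₀ ∈ K) (h : ¬i₀ < i) :
    (K.erase i₀).filter (fun j => j < i) = K.filter (fun j => j < i) := by
  conv_rhs => rw [← Finset.insert_erase hi₀]
  rw [Finset.filter_insert, if_neg h]

theorem not_i0_lt {i₀ i : Fin n} (hi₀ : (i₀ : ℕ) = m - 1) (hi : (i : ℕ) < m) : ¬i₀ < i := by
  rw [Fin.lt_def]; omega

/-- insert `i₀` into an index set. -/
def insIdx {k : ℕ} (i₀ : Fin n) (J : {J : Finset (Fin n) // J.card = k}) (h : i₀ ∉ J.1) :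
    {K : Finset (Fin n) // K.card = k + 1} :=
  ⟨insert i₀ J.1, by rw [Finset.card_insert_of_notMem h, J.2]⟩

/-- The preliminary potential `w₀`. -/
noncomputable def W0 {k : ℕ} (i₀ : Fin n) (u : kForm n (k + 1)) : kForm n k :=
  fun J => if h : i₀ ∈ J.1 then 0
    else ((-1 : ℝ) ^ k) • antider i₀ (u (insIdx i₀ J h))

/-- The boundary defect `g`. -/
noncomputable def Gf {k : ℕ} (i₀ : Fin n) (u : kForm n (k + 1)) : kForm n k :=
  fun J => substAt i₀ 1 (W0 i₀ u J)

variable {i₀ : Fin n} {u : kForm n (k + 1)}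

theorem pderiv_W0_zero (hi₀ : (i₀ : ℕ) = m - 1) (hm2 : 2 ≤ m)
    (hz : ∀ J, (∃ j : Fin n, j ∈ J.1 ∧ m ≤ (j : ℕ)) → u J = 0)
    (hun : ∀ J (j : Fin n), m ≤ (j : ℕ) → Unused j (u J))
    (i : Fin n) (J : {J : Finset (Fin n) // J.card = k})
    (h : m ≤ (i : ℕ) ∨ ∃ j : Fin n, j ∈ J.1 ∧ m ≤ (j : ℕ)) :
    pderiv i (W0 i₀ u J) = 0 := by
  rw [W0]
  by_cases hJ : i₀ ∈ J.1
  · rw [dif_pos hJ, map_zero]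
  · rw [dif_neg hJ]
    rcases h with h | ⟨j, hjJ, hj⟩
    · have hne : i ≠ i₀ := fun he => by rw [he, hi₀] at h; omega
      refine unused_pderiv_eq_zero (unused_smul (unused_antider hne ?_) _)
      exact hun _ i h
    · rw [hz (insIdx i₀ J hJ) ⟨j, Finset.mem_insert_of_mem hjJ, hj⟩, map_zero, smul_zero,
        map_zero]

theorem W0_zero_of_inactive (hz : ∀ J, (∃ j : Fin n, j ∈ J.1 ∧ m ≤ (j : ℕ)) → u J = 0)
    (J : {J : Finset (Fin n) // J.card = k}) (h : ∃ j : Fin n, j ∈ J.1 ∧ m ≤ (j : ℕ)) :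
    W0 i₀ u J = 0 := by
  rw [W0]
  by_cases hJ : i₀ ∈ J.1
  · rw [dif_pos hJ]
  · rw [dif_neg hJ]
    obtain ⟨j, hjJ, hj⟩ := h
    rw [hz (insIdx i₀ J hJ) ⟨j, Finset.mem_insert_of_mem hjJ, hj⟩, map_zero, smul_zero]

theorem W0_deg (hdeg : ∀ J, (u J).totalDegree ≤ r) (J : {J : Finset (Fin n) // J.card = k}) :
    (W0 i₀ u J).totalDegree ≤ r + 1 := by
  rw [W0]
  by_cases hJ : i₀ ∈ J.1
  · rw [dif_pos hJ]; simp
  · rw [dif_neg hJ]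
    exact (totalDegree_smul_le _ _).trans ((deg_antider _ _).trans (by
      exact Nat.add_le_add_right (hdeg _) 1))

theorem W0_unused (hi₀ : (i₀ : ℕ) = m - 1) (hm2 : 2 ≤ m)
    (hun : ∀ J (j : Fin n), m ≤ (j : ℕ) → Unused j (u J))
    (J : {J : Finset (Fin n) // J.card = k}) (j : Fin n) (hj : m ≤ (j : ℕ)) :
    Unused j (W0 i₀ u J) := by
  rw [W0]
  by_cases hJ : i₀ ∈ J.1
  · rw [dif_pos hJ]; exact unused_zero j
  · rw [dif_neg hJ]
    have hne : j ≠ i₀ := fun he => by rw [he, hi₀] at hj; omega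
    exact unused_smul (unused_antider hne (hun _ j hj)) _

theorem W0_trace (hi₀ : (i₀ : ℕ) = m - 1) (hm2 : 2 ≤ m)
    (htr : ∀ i : Fin n, (i : ℕ) < m → ∀ c : ℝ, (c = 0 ∨ c = 1) →
      ∀ J, i ∉ J.1 → substAt i c (u J) = 0)
    (i : Fin n) (hi : (i : ℕ) < m) (c : ℝ) (hc : c = 0 ∨ c = 1)
    (J : {J : Finset (Fin n) // J.card = k}) (hiJ : i ∉ J.1)
    (hnot : ¬(i = i₀ ∧ c = 1)) :
    substAt i c (W0 i₀ u J) = 0 := by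
  rw [W0]
  by_cases hJ : i₀ ∈ J.1
  · rw [dif_pos hJ, map_zero]
  · rw [dif_neg hJ]
    by_cases hii : i = i₀
    · have hc0 : c = 0 := by rcases hc with h | h; exact h; exact absurd ⟨hii, h⟩ hnot
      subst hii hc0
      rw [map_smul, substAt_zero_antider, smul_zero]
    · rw [map_smul, substAt_antider_comm hii c,
        htr i hi c hc (insIdx i₀ J hJ) (by
          rw [insIdx, Finset.mem_insert]
          push_neg
          exact ⟨hii, hiJ⟩), map_zero, smul_zero]

end Core

section Core2
variable {n m r k : ℕ} {i₀ : Fin n} {u : kForm n (k + 1)}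

theorem Gf_deg (hdeg : ∀ J, (u J).totalDegree ≤ r) (J : {J : Finset (Fin n) // J.card = k}) :
    (Gf i₀ u J).totalDegree ≤ r := by
  rw [Gf, W0]
  by_cases hJ : i₀ ∈ J.1
  · rw [dif_pos hJ, map_zero]; simp
  · rw [dif_neg hJ, map_smul]
    exact (totalDegree_smul_le _ _).trans ((deg_substAt_antider _ _ _).trans (hdeg _))

theorem Gf_zero_of_inactive (hi₀ : (i₀ : ℕ) = m - 1)
    (hz : ∀ J, (∃ j : Fin n, j ∈ J.1 ∧ m ≤ (j : ℕ)) → u J = 0)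
    (J : {J : Finset (Fin n) // J.card = k})
    (h : ∃ j : Fin n, j ∈ J.1 ∧ m - 1 ≤ (j : ℕ)) : Gf i₀ u J = 0 := by
  obtain ⟨j, hjJ, hj⟩ := h
  rw [Gf]
  by_cases hjm : m ≤ (j : ℕ)
  · rw [W0_zero_of_inactive hz J ⟨j, hjJ, hjm⟩, map_zero]
  · have : j = i₀ := Fin.ext (by omega)
    subst this
    rw [W0, dif_pos hjJ, map_zero]

theorem Gf_unused (hi₀ : (i₀ : ℕ) = m - 1) (hm2 : 2 ≤ m)
    (hun : ∀ J (j : Fin n), m ≤ (j : ℕ) → Unused j (u J))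
    (J : {J : Finset (Fin n) // J.card = k}) (j : Fin n) (hj : m - 1 ≤ (j : ℕ)) :
    Unused j (Gf i₀ u J) := by
  rw [Gf]
  by_cases hjm : m ≤ (j : ℕ)
  · have hne : j ≠ i₀ := fun he => by rw [he, hi₀] at hjm; omega
    exact unused_substAt hne 1 (W0_unused hi₀ hm2 hun J j hjm)
  · have : j = i₀ := Fin.ext (by omega)
    subst this
    exact unused_substAt_self 1 _

theorem Gf_trace (hi₀ : (i₀ : ℕ) = m - 1) (hm2 : 2 ≤ m)
    (htr : ∀ i : Fin n, (i : ℕ) < m → ∀ c : ℝ, (c = 0 ∨ c = 1) →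
      ∀ J, i ∉ J.1 → substAt i c (u J) = 0)
    (i : Fin n) (hi : (i : ℕ) < m - 1) (c : ℝ) (hc : c = 0 ∨ c = 1)
    (J : {J : Finset (Fin n) // J.card = k}) (hiJ : i ∉ J.1) :
    substAt i c (Gf i₀ u J) = 0 := by
  have hne : i ≠ i₀ := fun he => by rw [he, hi₀] at hi; omega
  rw [Gf, substAt_substAt_comm (Ne.symm hne).symm c 1,
    W0_trace hi₀ hm2 htr i (by omega) c hc J hiJ (fun h => hne h.1), map_zero]

end Core2

section Core3
variable {n m r k : ℕ}

theorem dTerm_of_mem (k : ℕ) (v : kForm n k) (S : Finset (Fin n)) (hS : S.card = k + 1)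
    {i : Fin n} (h : i ∈ S) (pf : (S.erase i).card = k) :
    dTerm k v S hS i
      = ((-1 : ℝ) ^ (S.filter (fun j => j < i)).card) • pderiv i (v ⟨S.erase i, pf⟩) := by
  rw [dTerm, dif_pos h]

theorem apply_coe {k : ℕ} (v : kForm n k) {S : Finset (Fin n)} (pS : S.card = k)
    (K : {J : Finset (Fin n) // J.card = k}) (h : S = K.1) : v ⟨S, pS⟩ = v K := by
  cases K with
  | mk Kv Kp => subst h; rfl

variable {i₀ : Fin n} {u : kForm n (k + 1)}

theorem extDeriv_W0 (hi₀ : (i₀ : ℕ) = m - 1) (hm2 : 2 ≤ m)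
    (hz : ∀ J, (∃ j : Fin n, j ∈ J.1 ∧ m ≤ (j : ℕ)) → u J = 0)
    (hun : ∀ J (j : Fin n), m ≤ (j : ℕ) → Unused j (u J))
    (htr : ∀ i : Fin n, (i : ℕ) < m → ∀ c : ℝ, (c = 0 ∨ c = 1) →
      ∀ J, i ∉ J.1 → substAt i c (u J) = 0)
    (hdu : polyExtDeriv n (k + 1) u = 0) :
    polyExtDeriv n k (W0 i₀ u) = u := by
  have hi₀m : (i₀ : ℕ) < m := by omega
  funext K
  rw [polyExtDeriv_apply]
  by_cases hKa : ∀ j ∈ K.1, (j : ℕ) < m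
  · by_cases hK : i₀ ∈ K.1
    · -- only the `i₀` term survives
      rw [Finset.sum_eq_single_of_mem i₀ hK (fun b hb hbne => by
        rw [dTerm, dif_pos hb, W0,
          dif_pos (Finset.mem_erase.mpr ⟨fun h => hbne (by rw [h]), hK⟩), map_zero, smul_zero])]
      have hcard : (K.1.erase i₀).card = k := by
        rw [Finset.card_erase_of_mem hK, K.2]; omega
      rw [dTerm_of_mem k (W0 i₀ u) K.1 K.2 hK hcard, filter_lt_top K.1 hi₀ hm2 hKa, hcard, W0,
        dif_neg (Finset.notMem_erase i₀ K.1)]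
      have hKK : insIdx i₀ ⟨K.1.erase i₀, hcard⟩ (Finset.notMem_erase i₀ K.1) = K :=
        Subtype.ext (Finset.insert_erase hK)
      rw [hKK, Derivation.map_smul, pderiv_antider, smul_smul, ← pow_add,
        Even.neg_one_pow ⟨k, rfl⟩, one_smul]
    · -- main case: use closedness of `u`
      have hKcard : (insert i₀ K.1).card = (k + 1) + 1 := by
        rw [Finset.card_insert_of_notMem hK, K.2]
      have h0 : ∑ i ∈ insert i₀ K.1, dTerm (k + 1) u (insert i₀ K.1) hKcard i = 0 := by
        have h := congrFun hdu (⟨insert i₀ K.1, hKcard⟩ : {S : Finset (Fin n) //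
          S.card = (k + 1) + 1})
        rw [polyExtDeriv_apply] at h
        exact h
      rw [Finset.sum_insert hK] at h0
      have hsum := eq_neg_of_add_eq_zero_right h0
      have hterm : ∀ i ∈ K.1, dTerm k (W0 i₀ u) K.1 K.2 i
          = ((-1 : ℝ) ^ k) • antider i₀ (dTerm (k + 1) u (insert i₀ K.1) hKcard i) := by
        intro i hi
        have hii₀ : i ≠ i₀ := fun h => hK (h ▸ hi)
        have hi₀e : i₀ ∉ K.1.erase i := fun h => hK (Finset.mem_of_mem_erase h)
        have hce : (K.1.erase i).card = k := by
          rw [Finset.card_erase_of_mem hi, K.2]; omega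
        have hce' : ((insert i₀ K.1).erase i).card = k + 1 := by
          rw [Finset.card_erase_of_mem (Finset.mem_insert_of_mem hi), hKcard]; omega
        rw [dTerm_of_mem k (W0 i₀ u) K.1 K.2 hi hce,
          dTerm_of_mem (k + 1) u (insert i₀ K.1) hKcard (Finset.mem_insert_of_mem hi) hce',
          W0, dif_neg hi₀e]
        rw [apply_coe u hce' (insIdx i₀ ⟨K.1.erase i, hce⟩ hi₀e)
          (Finset.erase_insert_of_ne (Ne.symm hii₀)),
          filter_lt_insert K.1 (not_i0_lt hi₀ (hKa i hi))]
        rw [Derivation.map_smul, pderiv_antider_comm hii₀, map_smul]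
        rw [smul_comm]
      rw [Finset.sum_congr rfl hterm, ← Finset.smul_sum, ← map_sum, hsum]
      have hce0 : ((insert i₀ K.1).erase i₀).card = k + 1 := by
        rw [Finset.erase_insert hK, K.2]
      rw [dTerm_of_mem (k + 1) u (insert i₀ K.1) hKcard (Finset.mem_insert_self i₀ K.1) hce0,
        apply_coe u hce0 K (Finset.erase_insert hK),
        filter_lt_top (insert i₀ K.1) hi₀ hm2 (fun j hj => by
          rcases Finset.mem_insert.mp hj with rfl | hj
          · exact hi₀m
          · exact hKa j hj),
        hce0]
      rw [map_neg, map_smul, antider_pderiv, htr i₀ hi₀m 0 (Or.inl rfl) K hK, sub_zero,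
        smul_neg, smul_smul, ← pow_add, Odd.neg_one_pow ⟨k, by ring⟩, neg_smul, one_smul,
        neg_neg]
  · push_neg at hKa
    obtain ⟨j0, hj0K, hj0⟩ := hKa
    rw [hz K ⟨j0, hj0K, by omega⟩]
    refine Finset.sum_eq_zero fun i hi => ?_
    rw [dTerm, dif_pos hi, pderiv_W0_zero hi₀ hm2 hz hun i _ ?_, smul_zero]
    by_cases hij : i = j0
    · exact Or.inl (by rw [hij]; omega)
    · exact Or.inr ⟨j0, Finset.mem_erase.mpr ⟨Ne.symm hij, hj0K⟩, by omega⟩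

end Core3

section Core4
variable {n m r k : ℕ} {i₀ : Fin n} {u : kForm n (k + 1)}

theorem Gf_mem_zero (J : {J : Finset (Fin n) // J.card = k}) (h : i₀ ∈ J.1) :
    Gf i₀ u J = 0 := by
  rw [Gf, W0, dif_pos h, map_zero]

theorem extDeriv_Gf (hi₀ : (i₀ : ℕ) = m - 1) (hm2 : 2 ≤ m)
    (hz : ∀ J, (∃ j : Fin n, j ∈ J.1 ∧ m ≤ (j : ℕ)) → u J = 0)
    (hun : ∀ J (j : Fin n), m ≤ (j : ℕ) → Unused j (u J))
    (htr : ∀ i : Fin n, (i : ℕ) < m → ∀ c : ℝ, (c = 0 ∨ c = 1) →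
      ∀ J, i ∉ J.1 → substAt i c (u J) = 0)
    (hdu : polyExtDeriv n (k + 1) u = 0) :
    polyExtDeriv n k (Gf i₀ u) = 0 := by
  have hw := extDeriv_W0 hi₀ hm2 hz hun htr hdu
  have hi₀m : (i₀ : ℕ) < m := by omega
  funext K
  rw [polyExtDeriv_apply]
  by_cases hK : i₀ ∈ K.1
  · refine (Finset.sum_eq_zero fun i hi => ?_).trans (by rfl)
    rcases eq_or_ne i i₀ with rfl | hii
    · simp only [dTerm, dif_pos hi, Gf]
      rw [unused_pderiv_eq_zero (unused_substAt_self 1 _), smul_zero]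
    · have hmem : i₀ ∈ K.1.erase i := Finset.mem_erase.mpr ⟨Ne.symm hii, hK⟩
      rw [dTerm, dif_pos hi, Gf_mem_zero _ hmem, map_zero, smul_zero]
  · have hterm : ∀ i ∈ K.1, dTerm k (Gf i₀ u) K.1 K.2 i
        = substAt i₀ 1 (dTerm k (W0 i₀ u) K.1 K.2 i) := by
      intro i hi
      have hii : i ≠ i₀ := fun h => hK (h ▸ hi)
      have hce : (K.1.erase i).card = k := by
        rw [Finset.card_erase_of_mem hi, K.2]; omega
      rw [dTerm_of_mem k (Gf i₀ u) K.1 K.2 hi hce, dTerm_of_mem k (W0 i₀ u) K.1 K.2 hi hce,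
        map_smul]
      congr 1
      exact pderiv_substAt_comm hii 1 _
    rw [Finset.sum_congr rfl hterm, ← map_sum, ← polyExtDeriv_apply, hw]
    by_cases hKa : ∀ j ∈ K.1, (j : ℕ) < m
    · rw [htr i₀ hi₀m 1 (Or.inr rfl) K hK]; rfl
    · push_neg at hKa
      obtain ⟨j0, hj0, hj⟩ := hKa
      rw [hz K ⟨j0, hj0, by omega⟩, map_zero]; rfl

end Core4

section MoreHelpers
variable {n : ℕ}

theorem unused_substAt_eq {i : Fin n} (c : ℝ) {p : MvPolynomial (Fin n) ℝ} (h : Unused i p) :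
    substAt i c p = p := by
  conv_lhs => rw [as_sum p, map_sum]
  conv_rhs => rw [as_sum p]
  refine Finset.sum_congr rfl fun s hs => ?_
  rw [substAt_monomial, h s hs, pow_zero, one_smul, fsH s (h s hs)]

theorem unused_sub {i : Fin n} {p q : MvPolynomial (Fin n) ℝ} (hp : Unused i p)
    (hq : Unused i q) : Unused i (p - q) := by
  intro s hs
  by_contra hsi
  have h1 : coeff s p = 0 := by
    by_contra hc; exact hsi (hp s (mem_support_iff.mpr hc))
  have h2 : coeff s q = 0 := by
    by_contra hc; exact hsi (hq s (mem_support_iff.mpr hc))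
  exact mem_support_iff.mp hs (by rw [coeff_sub, h1, h2, sub_zero])

theorem substAt_X {i j : Fin n} (c : ℝ) :
    substAt i c (X j) = if j = i then C c else X j :=
  bind₁_X_right _ _

end MoreHelpers

theorem aux (n : ℕ) : ∀ k m r : ℕ, m ≤ n → k + 2 ≤ m →
    ∀ u : kForm n (k + 1),
    (∀ J, (u J).totalDegree ≤ r) →
    (∀ J, (∃ j : Fin n, j ∈ J.1 ∧ m ≤ (j : ℕ)) → u J = 0) →
    (∀ J (j : Fin n), m ≤ (j : ℕ) → Unused j (u J)) →
    (∀ i : Fin n, (i : ℕ) < m → ∀ c : ℝ, (c = 0 ∨ c = 1) → ∀ J, i ∉ J.1 →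
      substAt i c (u J) = 0) →
    polyExtDeriv n (k + 1) u = 0 →
    ∃ w : kForm n k,
      (∀ J, (w J).totalDegree ≤ r + 1) ∧
      (∀ J, (∃ j : Fin n, j ∈ J.1 ∧ m ≤ (j : ℕ)) → w J = 0) ∧
      (∀ J (j : Fin n), m ≤ (j : ℕ) → Unused j (w J)) ∧
      (∀ i : Fin n, (i : ℕ) < m → ∀ c : ℝ, (c = 0 ∨ c = 1) → ∀ J, i ∉ J.1 →
        substAt i c (w J) = 0) ∧
      polyExtDeriv n k w = u := by
  intro k
  induction k with
  | zero =>
    intro m r hmn hk2 u hdeg hz hun htr hdu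
    have hm2 : 2 ≤ m := hk2
    set i₀ : Fin n := ⟨m - 1, by omega⟩ with hi₀def
    have hi₀ : (i₀ : ℕ) = m - 1 := rfl
    have hgzero : ∀ J, Gf i₀ u J = 0 := by
      intro J
      have hJ : J.1 = ∅ := Finset.card_eq_zero.mp J.2
      refine eq_zero_of_pderivs _ (fun j => ?_) ⟨0, by omega⟩
        (Gf_trace hi₀ hm2 htr ⟨0, by omega⟩ (show (0 : ℕ) < m - 1 by omega) 0 (Or.inl rfl) J
          (by rw [hJ]; exact Finset.notMem_empty _))
      by_cases hj : (j : ℕ) < m - 1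
      · have hdg := extDeriv_Gf hi₀ hm2 hz hun htr hdu
        have h := congrFun hdg (⟨{j}, Finset.card_singleton j⟩ :
          {S : Finset (Fin n) // S.card = 0 + 1})
        rw [polyExtDeriv_apply, Finset.sum_singleton,
          dTerm_of_mem 0 (Gf i₀ u) {j} (Finset.card_singleton j)
            (Finset.mem_singleton_self j) (by simp)] at h
        rw [apply_coe (Gf i₀ u) _ J (by rw [Finset.erase_singleton, hJ])] at h
        simpa [Finset.filter_singleton] using h
      · exact unused_pderiv_eq_zero (Gf_unused hi₀ hm2 hun J j (by omega))
    refine ⟨W0 i₀ u, W0_deg hdeg, W0_zero_of_inactive hz, W0_unused hi₀ hm2 hun, ?_,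
      extDeriv_W0 hi₀ hm2 hz hun htr hdu⟩
    intro i hi c hc J hiJ
    by_cases hcase : i = i₀ ∧ c = 1
    · obtain ⟨rfl, rfl⟩ := hcase
      exact hgzero J
    · exact W0_trace hi₀ hm2 htr i hi c hc J hiJ hcase
  | succ k ih =>
    intro m r hmn hk2 u hdeg hz hun htr hdu
    have hm2 : 2 ≤ m := by omega
    set i₀ : Fin n := ⟨m - 1, by omega⟩ with hi₀def
    have hi₀ : (i₀ : ℕ) = m - 1 := rfl
    obtain ⟨h, hhdeg, hhz, hhun, hhtr, hdh⟩ :=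
      ih (m - 1) r (by omega) (by omega) (Gf i₀ u) (Gf_deg hdeg)
        (Gf_zero_of_inactive hi₀ hz) (Gf_unused hi₀ hm2 hun) (Gf_trace hi₀ hm2 htr)
        (extDeriv_Gf hi₀ hm2 hz hun htr hdu)
    set cf : kForm n (k + 1) := fun J =>
      if hJ : i₀ ∈ J.1 then (-(-1 : ℝ) ^ (k + 1)) •
        h ⟨J.1.erase i₀, by rw [Finset.card_erase_of_mem hJ, J.2]; omega⟩
      else X i₀ * Gf i₀ u J with hcf
    have hdcf : polyExtDeriv n (k + 1) cf = 0 := by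
      funext K
      rw [polyExtDeriv_apply]
      by_cases hK : i₀ ∈ K.1
      · by_cases hKa : ∀ j ∈ K.1, (j : ℕ) < m
        · have hceK : (K.1.erase i₀).card = k + 1 := by
            rw [Finset.card_erase_of_mem hK, K.2]; omega
          rw [← Finset.add_sum_erase K.1 _ hK]
          have ht0 : dTerm (k + 1) cf K.1 K.2 i₀
              = ((-1 : ℝ) ^ (k + 1)) • Gf i₀ u ⟨K.1.erase i₀, hceK⟩ := by
            rw [dTerm_of_mem (k + 1) cf K.1 K.2 hK hceK,
              filter_lt_top K.1 hi₀ hm2 hKa, hceK]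
            congr 1
            simp only [hcf]
            rw [dif_neg (Finset.notMem_erase i₀ K.1)]
            rw [pderiv_mul, pderiv_X_self, one_mul,
              show pderiv i₀ (Gf i₀ u ⟨K.1.erase i₀, hceK⟩) = 0 from
                unused_pderiv_eq_zero (unused_substAt_self 1 _), mul_zero, add_zero]
          have hrest : ∀ i ∈ K.1.erase i₀, dTerm (k + 1) cf K.1 K.2 i
              = (-(-1 : ℝ) ^ (k + 1)) • dTerm k h (K.1.erase i₀) hceK i := by
            intro i hi'
            have hiK := Finset.mem_of_mem_erase hi'
            have hii : i ≠ i₀ := Finset.ne_of_mem_erase hi'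
            have hcei : (K.1.erase i).card = k + 1 := by
              rw [Finset.card_erase_of_mem hiK, K.2]; omega
            have hcee : ((K.1.erase i₀).erase i).card = k := by
              rw [Finset.card_erase_of_mem hi', hceK]; omega
            rw [dTerm_of_mem (k + 1) cf K.1 K.2 hiK hcei,
              dTerm_of_mem k h (K.1.erase i₀) hceK hi' hcee]
            have hmm : i₀ ∈ K.1.erase i := Finset.mem_erase.mpr ⟨Ne.symm hii, hK⟩
            simp only [hcf]
            rw [dif_pos hmm, Derivation.map_smul,
              apply_coe h _ ⟨(K.1.erase i₀).erase i, hcee⟩ Finset.erase_right_comm,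
              filter_lt_erase K.1 hK (not_i0_lt hi₀ (hKa i hiK)), smul_comm]
          rw [ht0, Finset.sum_congr rfl hrest, ← Finset.smul_sum,
            show ∑ i ∈ K.1.erase i₀, dTerm k h (K.1.erase i₀) hceK i
                = polyExtDeriv n k h ⟨K.1.erase i₀, hceK⟩ from
                  (polyExtDeriv_apply k h ⟨K.1.erase i₀, hceK⟩).symm,
            hdh, neg_smul, add_neg_cancel]
          rfl
        · push_neg at hKa
          obtain ⟨j0, hj0K, hj0⟩ := hKa
          have hj0' : m ≤ (j0 : ℕ) := by omega
          have hj0i₀ : j0 ≠ i₀ := fun h' => by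
            rw [h'] at hj0'; rw [hi₀] at hj0'; omega
          refine (Finset.sum_eq_zero fun i hi => ?_).trans (by rfl)
          have hcei : (K.1.erase i).card = k + 1 := by
            rw [Finset.card_erase_of_mem hi, K.2]; omega
          rw [dTerm_of_mem (k + 1) cf K.1 K.2 hi hcei]
          rcases eq_or_ne i i₀ with rfl | hii
          · simp only [hcf]
            rw [dif_neg (Finset.notMem_erase i₀ K.1)]
            rw [Gf_zero_of_inactive hi₀ hz _
              ⟨j0, Finset.mem_erase.mpr ⟨hj0i₀, hj0K⟩, by omega⟩, mul_zero, map_zero,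
              smul_zero]
          · have hmm : i₀ ∈ K.1.erase i := Finset.mem_erase.mpr ⟨Ne.symm hii, hK⟩
            simp only [hcf]
            rw [dif_pos hmm]
            by_cases him : m ≤ (i : ℕ)
            · rw [unused_pderiv_eq_zero (unused_smul (hhun _ i (by omega)) _), smul_zero]
            · have hji : j0 ≠ i := fun h' => by rw [h'] at hj0'; exact him hj0'
              rw [hhz _ ⟨j0, Finset.mem_erase.mpr ⟨hj0i₀,
                  Finset.mem_erase.mpr ⟨hji, hj0K⟩⟩, by omega⟩, smul_zero, map_zero,
                smul_zero]
      · have hterm : ∀ i ∈ K.1, dTerm (k + 1) cf K.1 K.2 i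
            = X i₀ * dTerm (k + 1) (Gf i₀ u) K.1 K.2 i := by
          intro i hi
          have hii : i ≠ i₀ := fun h' => hK (h' ▸ hi)
          have hcei : (K.1.erase i).card = k + 1 := by
            rw [Finset.card_erase_of_mem hi, K.2]; omega
          rw [dTerm_of_mem (k + 1) cf K.1 K.2 hi hcei,
            dTerm_of_mem (k + 1) (Gf i₀ u) K.1 K.2 hi hcei]
          simp only [hcf]
          rw [dif_neg (fun h' => hK (Finset.mem_of_mem_erase h'))]
          rw [pderiv_mul, pderiv_X_of_ne (Ne.symm hii), zero_mul, zero_add, mul_smul_comm]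
        rw [Finset.sum_congr rfl hterm, ← Finset.mul_sum, ← polyExtDeriv_apply,
          extDeriv_Gf hi₀ hm2 hz hun htr hdu]
        show X i₀ * 0 = _
        rw [mul_zero]
        rfl
    refine ⟨W0 i₀ u - cf, ?_, ?_, ?_, ?_, ?_⟩
    · intro J
      simp only [Pi.sub_apply]
      rw [sub_eq_add_neg]
      refine (totalDegree_add _ _).trans (max_le (W0_deg hdeg J) ?_)
      rw [totalDegree_neg]
      simp only [hcf]
      by_cases hJ : i₀ ∈ J.1
      · rw [dif_pos hJ]
        exact (totalDegree_smul_le _ _).trans (hhdeg _)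
      · rw [dif_neg hJ]
        refine (totalDegree_mul _ _).trans ?_
        have := Gf_deg (i₀ := i₀) hdeg J
        have hX : (X i₀ : MvPolynomial (Fin n) ℝ).totalDegree = 1 := totalDegree_X i₀
        omega
    · intro J hJ
      simp only [Pi.sub_apply]
      rw [W0_zero_of_inactive hz J hJ, zero_sub, neg_eq_zero]
      obtain ⟨j0, hj0J, hj0⟩ := hJ
      have hj0i₀ : j0 ≠ i₀ := fun h' => by rw [h', hi₀] at hj0; omega
      simp only [hcf]
      by_cases hJ0 : i₀ ∈ J.1
      · rw [dif_pos hJ0,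
          hhz _ ⟨j0, Finset.mem_erase.mpr ⟨hj0i₀, hj0J⟩, by omega⟩, smul_zero]
      · rw [dif_neg hJ0, Gf_zero_of_inactive hi₀ hz J ⟨j0, hj0J, by omega⟩, mul_zero]
    · intro J j hj
      simp only [Pi.sub_apply]
      refine unused_sub (W0_unused hi₀ hm2 hun J j hj) ?_
      have hji₀ : j ≠ i₀ := fun h' => by rw [h', hi₀] at hj; omega
      simp only [hcf]
      by_cases hJ0 : i₀ ∈ J.1
      · rw [dif_pos hJ0]
        exact unused_smul (hhun _ j (by omega)) _
      · rw [dif_neg hJ0]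
        exact unused_X_mul hji₀ (Gf_unused hi₀ hm2 hun J j (by omega))
    · intro i hi c hc J hiJ
      simp only [Pi.sub_apply]
      by_cases hcase : i = i₀ ∧ c = 1
      · obtain ⟨rfl, rfl⟩ := hcase
        rw [map_sub]
        simp only [hcf]
        rw [dif_neg hiJ, map_mul, substAt_X, if_pos rfl,
          show substAt i₀ 1 (Gf i₀ u J) = Gf i₀ u J from
            unused_substAt_eq 1 (unused_substAt_self 1 _)]
        show Gf i₀ u J - C 1 * Gf i₀ u J = 0
        rw [C_1, one_mul, sub_self]
      · have hW := W0_trace hi₀ hm2 htr i hi c hc J hiJ hcase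
        rw [map_sub, hW, zero_sub, neg_eq_zero]
        by_cases hJ0 : i₀ ∈ J.1
        · have hii : i ≠ i₀ := fun h' => hiJ (h' ▸ hJ0)
          have hvi : (i : ℕ) ≠ m - 1 := fun h' => hii (Fin.ext (by rw [h', ← hi₀]))
          simp only [hcf]
          rw [dif_pos hJ0, map_smul,
            hhtr i (by omega) c hc _ (fun hmem => hiJ (Finset.mem_of_mem_erase hmem)),
            smul_zero]
        · simp only [hcf]
          rw [dif_neg hJ0, map_mul]
          rcases eq_or_ne i i₀ with rfl | hii
          · have hc0 : c = 0 := by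
              rcases hc with rfl | rfl
              · rfl
              · exact absurd ⟨rfl, rfl⟩ hcase
            subst hc0
            rw [substAt_X, if_pos rfl, map_zero, zero_mul]
          · have hvi : (i : ℕ) ≠ m - 1 := fun h' => hii (Fin.ext (by rw [h', ← hi₀]))
            rw [Gf_trace hi₀ hm2 htr i (by omega) c hc J hiJ, mul_zero]
    · rw [map_sub, extDeriv_W0 hi₀ hm2 hz hun htr hdu, hdcf, sub_zero]

theorem mem_PLambda0_iff {n k r : ℕ} (u : kForm n k) :
    u ∈ PLambda0 n k r ↔
      (∀ J, (u J).totalDegree ≤ r) ∧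
      (∀ i : Fin n, ∀ c : ℝ, (c = 0 ∨ c = 1) →
        ∀ J, i ∉ J.1 → substAt i c (u J) = 0) := by
  simp only [PLambda0, PLambda, Submodule.mem_inf, Submodule.mem_iInf, Submodule.mem_comap,
    LinearMap.mem_ker, LinearMap.coe_comp, Function.comp_apply, LinearMap.proj_apply,
    mem_restrictTotalDegree, AlgHom.toLinearMap_apply, Set.mem_insert_iff,
    Set.mem_singleton_iff]

/-- (Stated with `k + 1` in place of the paper's `k`, so that
`1 ≤ k + 1 ≤ n − 1` covers exactly the range `1 ≤ k ≤ n−1`.)  Let `u` be a polynomial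
`(k+1)`-form of degree `≤ r` with vanishing trace on `∂[0,1]ⁿ` and `du = 0`.  Then there is
a polynomial `k`-form `w` of degree `≤ r + 1` with vanishing trace on `∂[0,1]ⁿ` such that
`dw = u`. -/
theorem stmt9 (n k r : ℕ) (hn : 1 ≤ n) (hk : k + 1 ≤ n - 1)
    (u : kForm n (k + 1)) (hu : u ∈ PLambda0 n (k + 1) r)
    (hdu : polyExtDeriv n (k + 1) u = 0) :
    ∃ w : kForm n k, w ∈ PLambda0 n k (r + 1) ∧ polyExtDeriv n k w = u := by
  obtain ⟨hdeg, htr⟩ := (mem_PLambda0_iff u).mp hu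
  obtain ⟨w, hwdeg, _, _, hwtr, hwd⟩ :=
    aux n k n r le_rfl (by omega) u hdeg
      (fun J hJ => absurd hJ.choose_spec.2 (by have := hJ.choose.isLt; omega))
      (fun J j hj => absurd j.isLt (by omega))
      (fun i _ c hc J hiJ => htr i c hc J hiJ) hdu
  exact ⟨w, (mem_PLambda0_iff w).mpr ⟨hwdeg, fun i c hc J hiJ => hwtr i i.isLt c hc J hiJ⟩, hwd⟩
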